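/- Suppose γ > 0 is such that μ(B) ≤ e^{−γℓ}. Then there is a constant C depending only on d such that Σ_{x≠0} Σ_{y∼x} μ_0[ c_{xy}(η) (f(η^{xy}) − f(η))² ] ≤ C ℓ^{d+2} e^{−γℓ}. -/

import Mathlib

open MeasureTheory ENNReal

noncomputable section

namespace KA

open scoped Classical

/-- Sites of the lattice `ℤ^d`. -/
abbrev Site (d : ℕ) := Fin d → ℤ

/-- A configuration: `true` = occupied, `false` = empty. -/
abbrev Config (d : ℕ) := Site d → Bool

variable {d : ℕ}

def origin : Site d := fun _ => 0

def eVec (d : ℕ) (i : Fin d) : Site d := fun j => if j = i then 1 else 0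

/-- Nearest neighbours in `ℤ^d`. -/
def adj (x y : Site d) : Prop := (∑ i, |x i - y i|) = 1

/-- The set of (at most `2d`) nearest neighbours of a site. -/
def neighbors (x : Site d) : Finset (Site d) :=
  Finset.image (fun p : Fin d × Bool =>
    Function.update x p.1 (x p.1 + if p.2 then 1 else -1)) Finset.univ

/-- The Kob-Andersen kinetic constraint `c_{xy}` for parameter `k`:
`x` has at least `k-1` empty neighbours other than `y`, and vice versa. -/
def constraint (k : ℕ) (η : Config d) (x y : Site d) : Prop :=
  k - 1 ≤ ((neighbors x).filter fun z => z ≠ y ∧ η z = false).card ∧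
  k - 1 ≤ ((neighbors y).filter fun z => z ≠ x ∧ η z = false).card

/-- `c_{xy}(η)` as a `{0,1}`-valued quantity. -/
def cval (k : ℕ) (η : Config d) (x y : Site d) : ℝ≥0∞ :=
  if constraint k η x y then 1 else 0

/-- `η^{xy}` : the configuration with the values at `x` and `y` exchanged. -/
def swap (η : Config d) (x y : Site d) : Config d :=
  fun z => if z = x then η y else if z = y then η x else η z

/-- `(τ_y η)(z) = η (z - y)`. -/
def shift (y : Site d) (η : Config d) : Config d := fun z => η (z - y)

/-- A local function depends on finitely many coordinates. -/
def IsLocal (f : Config d → ℝ) : Prop :=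
  ∃ S : Finset (Site d), ∀ η η' : Config d, (∀ x ∈ S, η x = η' x) → f η = f η'

def dotZ (u : Fin d → ℝ) (y : Site d) : ℝ := ∑ i, u i * (y i : ℝ)

/-- The environment part `Σ_{x ≠ 0} Σ_{y ∼ x} c_{xy} (f(η^{xy}) - f(η))²`. -/
def envTerm (k : ℕ) (f : Config d → ℝ) (η : Config d) : ℝ≥0∞ :=
  ∑' p : Site d × Site d,
    if p.1 ≠ origin ∧ adj p.1 p.2 then
      cval k η p.1 p.2 * ENNReal.ofReal ((f (swap η p.1 p.2) - f η) ^ 2)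
    else 0

/-- The tagged-particle part `Σ_{y ∼ 0} c_{0y} (u·y + f(τ_y η^{0y}) - f(η))²`. -/
def tagTerm (k : ℕ) (u : Fin d → ℝ) (f : Config d → ℝ) (η : Config d) : ℝ≥0∞ :=
  ∑' y : Site d,
    if adj origin y then
      cval k η origin y *
        ENNReal.ofReal ((dotZ u y + f (shift y (swap η origin y)) - f η) ^ 2)
    else 0

/-- The variational (Dirichlet) functional `E_u(f)` integrated against `μ₀`. -/
def energy (k : ℕ) (u : Fin d → ℝ) (μ0 : Measure (Config d)) (f : Config d → ℝ) : ℝ≥0∞ :=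
  ∫⁻ η, envTerm k f η + tagTerm k u f η ∂μ0

/-- `μ` is the Bernoulli product measure where each site is independently
occupied with probability `1 - q`. -/
def IsBernoulliProduct (q : ℝ) (μ : Measure (Config d)) : Prop :=
  IsProbabilityMeasure μ ∧
  ∀ (S : Finset (Site d)) (ζ : Site d → Bool),
    μ {η | ∀ x ∈ S, η x = ζ x} = ∏ x ∈ S, ENNReal.ofReal (if ζ x then 1 - q else q)

/-- `μ₀ = μ(· | η(0) = 1)`. -/
def condOcc (μ : Measure (Config d)) : Measure (Config d) :=
  ProbabilityTheory.cond μ {η | η origin = true}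

/-- The first standard basis vector of `ℝ^d`. -/
def e1R (d : ℕ) : Fin d → ℝ := fun i => if (i : ℕ) = 0 then 1 else 0

def basisR (d : ℕ) (i : Fin d) : Fin d → ℝ := fun j => if j = i then 1 else 0

/-- The quadratic form `u ↦ inf over local f of E_u(f)`. -/
def Qform (k : ℕ) (μ : Measure (Config d)) (u : Fin d → ℝ) : ℝ≥0∞ :=
  ⨅ f : {f : Config d → ℝ // IsLocal f}, energy k u (condOcc μ) f.1

/-- The self-diffusion coefficient `D(q) = inf_f E_{e₁}(f)`. -/
def diffCoeff (k : ℕ) (μ : Measure (Config d)) : ℝ≥0∞ := Qform k μ (e1R d)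

/-- `expIter n` is the `n`-fold iterated exponential. -/
def expIter : ℕ → ℝ → ℝ
  | 0, x => x
  | n + 1, x => Real.exp (expIter n x)

/-! ### Frameability, goodness, block-connectedness -/

/-- Fill every site outside `V` with a particle. -/
def fillOutside (V : Set (Site d)) (η : Config d) : Config d :=
  fun z => if z ∈ V then η z else true

/-- A single legal KA-`k`f transition inside `V`. -/
def KAStep (k : ℕ) (V : Set (Site d)) (η η' : Config d) : Prop :=
  ∃ x y, adj x y ∧ x ∈ V ∧ y ∈ V ∧ η x ≠ η y ∧ constraint k η x y ∧ η' = swap η x y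

/-- A generalized box with minimal corner `a`, spanning the directions in `E`,
with side length `m` (coordinates outside `E` are frozen at `a`). -/
def genBox (a : Site d) (E : Finset (Fin d)) (m : ℕ) : Set (Site d) :=
  {x | ∀ i, (i ∈ E → a i ≤ x i ∧ x i < a i + m) ∧ (i ∉ E → x i = a i)}

/-- The `k'`-th frame of the generalized box: the union of all of its
`(k'-1)`-dimensional slices passing through the minimal corner. -/
def genFrame (k' : ℕ) (a : Site d) (E : Finset (Fin d)) (m : ℕ) : Set (Site d) :=
  {x | x ∈ genBox a E m ∧ (E.filter fun i => x i ≠ a i).card ≤ k' - 1}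

/-- The generalized box is frameable for `η` : `η` (with the outside filled by
particles) is connected by legal KA-`k'`f transitions inside the box to a
configuration whose `k'`-th frame is empty. -/
def Frameable (k' : ℕ) (a : Site d) (E : Finset (Fin d)) (m : ℕ) (η : Config d) : Prop :=
  ∃ η', Relation.ReflTransGen (KAStep k' (genBox a E m)) (fillOutside (genBox a E m) η) η' ∧
    ∀ x ∈ genFrame k' a E m, η' x = false

def one (d : ℕ) : Site d := fun _ => 1

/-- minimal corner of the box `b + [m]^d`. -/
def corner (b : Site d) : Site d := fun i => b i + 1

/-- All codimension-one slices of the generalized box are `(k'-1)`-frameable,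
for every configuration differing from `η` in at most one site. -/
def SlicesOK (k' : ℕ) (a : Site d) (E : Finset (Fin d)) (m : ℕ) (η : Config d) : Prop :=
  ∀ η' : Config d, {x | η' x ≠ η x}.Subsingleton →
    ∀ i ∈ E, ∀ t : ℕ, t < m →
      Frameable (k' - 1) (Function.update a i (a i + t)) (E.erase i) m η'

/-- A good box: all codimension-one slices frameable (robustly to one spin flip),
with one extra empty site in addition to the ones required. -/
def GoodBox (k' : ℕ) (a : Site d) (E : Finset (Fin d)) (m : ℕ) (η : Config d) : Prop :=
  SlicesOK k' a E m η ∧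
  ∃ x₀ ∈ genBox a E m, η x₀ = false ∧ SlicesOK k' a E m (Function.update η x₀ true)

/-- The length scale `ℓ = ℓ(q)`. -/
def lscale (d k : ℕ) (c q : ℝ) : ℕ :=
  if k = 2 then ⌈c * Real.log (1 / q) * q ^ (-(1 : ℝ) / ((d : ℝ) - 1))⌉₊
  else ⌈c * expIter (k - 2) (q ^ (-(1 : ℝ) / ((d : ℝ) - (k : ℝ) + 1)))⌉₊

/-- The length scale `L = q^{-cℓ}`. -/
def Lscale (q c : ℝ) (ℓ : ℕ) : ℕ := ⌈q ^ (-(c * (ℓ : ℝ)))⌉₊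

/-- One step between adjacent boxes: the base point moves by `±ℓ e_i`. -/
def pathStep (ℓ : ℕ) (b b' : Site d) : Prop :=
  ∃ i : Fin d, ∃ s : Bool,
    b' = fun j => b j + if j = i then (if s then (ℓ : ℤ) else -(ℓ : ℤ)) else 0

/-- A `(d,k)`-super-good path of boxes of side `ℓ` inside the block `v + [L]^d`,
joining `v + [ℓ]^d` to `v + (L-ℓ)e_α + [ℓ]^d`, of length at most `3L`:
all boxes good and at least one frameable. -/
def SuperGoodPath (k ℓ L : ℕ) (v : Site d) (α : Fin d) (η : Config d) : Prop :=
  ∃ n : ℕ, n ≤ 3 * L ∧ ∃ b : ℕ → Site d,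
    b 0 = v ∧
    (b n = fun j => v j + if j = α then (L : ℤ) - (ℓ : ℤ) else 0) ∧
    (∀ m < n, pathStep ℓ (b m) (b (m + 1))) ∧
    (∀ m ≤ n, genBox (corner (b m)) Finset.univ ℓ ⊆ genBox (corner v) Finset.univ L) ∧
    (∀ m ≤ n, GoodBox k (corner (b m)) Finset.univ ℓ η) ∧
    (∃ m ≤ n, Frameable k (corner (b m)) Finset.univ ℓ η)

/-- minimal corner of the external face of the box `genBox a univ m` in
direction `j`, on the positive (`s = true`) or negative side. -/
def faceBase (a : Site d) (m : ℕ) (j : Fin d) (s : Bool) : Site d :=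
  Function.update a j (if s then a j + m else a j - 1)

/-- The face `F` is adjacent to the vertex `v`. -/
def FaceNear (v : Site d) (F : Set (Site d)) : Prop := ∃ x ∈ F, ∀ i, |x i - v i| ≤ 1

/-- All `(d-1)`-dimensional external faces of the box `genBox a univ m` that are
adjacent to the vertex `v` are `(d-1, k-1)`-good. -/
def GoodFacesAt (k : ℕ) (a : Site d) (m : ℕ) (v : Site d) (η : Config d) : Prop :=
  ∀ (j : Fin d) (s : Bool),
    FaceNear v (genBox (faceBase a m j s) (Finset.univ.erase j) m) →
    GoodBox (k - 1) (faceBase a m j s) (Finset.univ.erase j) m η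

/-- The coarse vertices `v` and `v + (L+1)e_α` are `(d,k)`-block-connected. -/
def BlockConnected (k ℓ L : ℕ) (v : Site d) (α : Fin d) (η : Config d) : Prop :=
  SuperGoodPath k ℓ L v α η ∧
  GoodFacesAt k (corner v) ℓ v η ∧
  GoodFacesAt k (corner (fun j => v j + if j = α then (L : ℤ) - (ℓ : ℤ) else 0)) (ℓ + 1)
    (fun j => v j + if j = α then (L : ℤ) + 1 else 0) η

/-! ### `T`-step moves -/

/-- A `T`-step move with domain determined by the set of configurations `M`,
whose transitions are legal KA-`k`f transitions contained in `V`,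
keeping track of the position of a marked particle. -/
structure TStepMove (d k : ℕ) (M : Set (Config d)) (V : Set (Site d)) (T : ℕ) where
  conf : Config d → ℕ → Config d
  pos : Config d → Site d → ℕ → Site d
  conf_zero : ∀ η ∈ M, conf η 0 = η
  pos_zero : ∀ η ∈ M, ∀ z : Site d, η z = true → pos η z 0 = z
  step : ∀ η ∈ M, ∀ z : Site d, η z = true → ∀ t < T,
    (conf η (t + 1) = conf η t ∧ pos η z (t + 1) = pos η z t) ∨
    ∃ x y, adj x y ∧ x ∈ V ∧ y ∈ V ∧ conf η t x = true ∧ conf η t y = false ∧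
      constraint k (conf η t) x y ∧ conf η (t + 1) = swap (conf η t) x y ∧
      pos η z (t + 1) = if pos η z t = x then y else pos η z t

/-- `Loss(M) ≤ K` : at every step, at most `2^K` configurations of the domain
have a common image. -/
def LossBoundedBy {d k : ℕ} {M : Set (Config d)} {V : Set (Site d)} {T : ℕ}
    (mv : TStepMove d k M V T) (K : ℝ) : Prop :=
  ∀ t < T, ∀ η' ∈ M, ∃ S : Finset (Config d),
    {η ∈ M | mv.conf η t = mv.conf η' t ∧ mv.conf η (t + 1) = mv.conf η' (t + 1)} ⊆ ↑S ∧
    (S.card : ℝ) ≤ (2 : ℝ) ^ K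

/-! ### Bond configurations on the coarse lattice -/

/-- A bond configuration on the coarse lattice: the edge `(i, α)` joins the
coarse vertices of index `i` and `i + e_α`. -/
abbrev BondConfig (d : ℕ) := (Site d × Fin d) → Bool

def IsLocalBond (g : BondConfig d → ℝ) : Prop :=
  ∃ S : Finset (Site d × Fin d), ∀ ω ω' : BondConfig d, (∀ e ∈ S, ω e = ω' e) → g ω = g ω'

/-- Translation of a bond configuration by a coarse index vector. -/
def bondShift (v : Site d) (ω : BondConfig d) : BondConfig d := fun e => (ω (e.1 - v, e.2))

/-- Two coarse indices joined by an open bond. -/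
def bondRel (ω : BondConfig d) (i j : Site d) : Prop :=
  (∃ α, j = i + eVec d α ∧ ω (i, α) = true) ∨ (∃ α, i = j + eVec d α ∧ ω (j, α) = true)

/-- The event `{0 ↔ ∞}`: the origin lies in an infinite open cluster. -/
def InfiniteCluster : Set (BondConfig d) :=
  {ω | {j : Site d | Relation.ReflTransGen (bondRel ω) origin j}.Infinite}

/-- The coarse index of the neighbour `± e_α` of the coarse origin. -/
def coarseIdx (d : ℕ) (α : Fin d) (s : Bool) : Site d :=
  if s then eVec d α else -(eVec d α)

/-- The actual lattice vector `±(L+1) e_α` of a coarse neighbour of the origin. -/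
def coarseVecZ (d L : ℕ) (α : Fin d) (s : Bool) : Site d :=
  fun j => ((L : ℤ) + 1) * coarseIdx d α s j

/-- Indicator of the bond between the coarse origin and its neighbour `± e_α`. -/
def edgeInd (ω : BondConfig d) (α : Fin d) (s : Bool) : ℝ≥0∞ :=
  if (if s then ω (origin, α) else ω (-(eVec d α), α)) = true then 1 else 0

/-- The auxiliary quadratic form `u ↦ u ⬝ D_aux u`. -/
def QauxForm (d L : ℕ) (μstar : Measure (BondConfig d)) (u : Fin d → ℝ) : ℝ≥0∞ :=
  ⨅ g : {g : BondConfig d → ℝ // IsLocalBond g},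
    ∑ α : Fin d, ∑ s : Bool,
      ∫⁻ ω, edgeInd ω α s *
        ENNReal.ofReal (((if s then (1 : ℝ) else -1) * ((L : ℝ) + 1) * u α +
          g.1 (bondShift (coarseIdx d α s) ω) - g.1 ω) ^ 2) ∂μstar

/-- Indicator (on microscopic configurations) that the coarse origin and its
neighbour `± e_α` are block-connected, for an abstract notion `BC`. -/
def microEdgeInd (BC : Site d → Fin d → Config d → Bool) (α : Fin d) (s : Bool)
    (η : Config d) : ℝ≥0∞ :=
  if (if s then BC origin α η else BC (-(eVec d α)) α η) = true then 1 else 0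

/-- The microscopic comparison form
`u ↦ inf_f Σ_{i ∼ 0} μ₀[ η̄_{0i} (u·i + f(τ_i η^{0,i}) - f(η))² ]`. -/
def microForm (d k L : ℕ) (BC : Site d → Fin d → Config d → Bool)
    (μ0 : Measure (Config d)) (u : Fin d → ℝ) : ℝ≥0∞ :=
  ⨅ f : {f : Config d → ℝ // IsLocal f},
    ∑ α : Fin d, ∑ s : Bool,
      ∫⁻ η, microEdgeInd BC α s η *
        ENNReal.ofReal (((if s then (1 : ℝ) else -1) * ((L : ℝ) + 1) * u α +
          f.1 (shift (coarseVecZ d L α s) (swap η origin (coarseVecZ d L α s))) - f.1 η) ^ 2)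
        ∂μ0

/-! ### d = 2 geometry -/

/-- The column `y + {c} × [ℓ]` in `ℤ²`. -/
def col2 (y : Site 2) (c : ℤ) (ℓ : ℕ) : Set (Site 2) :=
  {x | x 0 = y 0 + c ∧ y 1 + 1 ≤ x 1 ∧ x 1 ≤ y 1 + ℓ}

/-- The box `b + [ℓ]²`. -/
def box2 (b : Site 2) (ℓ : ℕ) : Set (Site 2) := genBox (corner b) Finset.univ ℓ

/-- `S` contains at least two empty sites. -/
def TwoEmptyIn (S : Set (Site 2)) (η : Config 2) : Prop :=
  ∃ a ∈ S, ∃ b ∈ S, a ≠ b ∧ η a = false ∧ η b = false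

/-- Every row and every column of the box `b + [ℓ]²` contains at least two
empty sites. -/
def RowsColsOK (b : Site 2) (ℓ : ℕ) (η : Config 2) : Prop :=
  (∀ t : ℕ, 1 ≤ t → t ≤ ℓ → TwoEmptyIn {z | z ∈ box2 b ℓ ∧ z 1 = b 1 + t} η) ∧
  (∀ t : ℕ, 1 ≤ t → t ≤ ℓ → TwoEmptyIn {z | z ∈ box2 b ℓ ∧ z 0 = b 0 + t} η)

/-- The box `b + [ℓ]²` is `(2,2)`-good: two empty sites in every row and
column, plus one additional empty site. -/
def Good22 (b : Site 2) (ℓ : ℕ) (η : Config 2) : Prop :=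
  RowsColsOK b ℓ η ∧
  ∃ w ∈ box2 b ℓ, η w = false ∧ RowsColsOK b ℓ (Function.update η w true)

/-! ### Bootstrap percolation -/

/-- The box `[-ℓ, ℓ]^d`. -/
def bigBox (d ℓ : ℕ) : Set (Site d) := {x | ∀ i, |x i| ≤ (ℓ : ℤ)}

/-- One step of `k`-neighbour bootstrap percolation on `[-ℓ,ℓ]^d` (sites
outside the box are left unchanged). -/
def BPstep (k ℓ : ℕ) (η : Config d) : Config d := fun x =>
  if x ∈ bigBox d ℓ then
    (if η x = true ∧
        ((neighbors x).filter fun z => z ∈ bigBox d ℓ ∧ η z = false).card < k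
      then true else false)
  else η x

/-- The limiting configuration of bootstrap percolation. -/
def BPinf (k ℓ : ℕ) (η : Config d) : Config d := fun x =>
  if ∀ t : ℕ, (BPstep k ℓ)^[t] η x = true then true else false

/-- One step along the bootstrap percolation cluster. -/
def bpRel (k ℓ : ℕ) (η : Config d) (a b : Site d) : Prop :=
  adj a b ∧ b ∈ bigBox d ℓ ∧ BPinf k ℓ η b = false

/-- The bootstrap percolation cluster of the origin. -/
def bpCluster (k ℓ : ℕ) (η : Config d) : Set (Site d) :=
  {x | Relation.ReflTransGen (bpRel k ℓ η) origin x}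

def coord0 (x : Site d) : ℤ := if h : 0 < d then x ⟨0, h⟩ else 0

/-- The first coordinate of the rightmost site of the bootstrap percolation
cluster of the origin. -/
def bpRightmost (k ℓ : ℕ) (η : Config d) : ℝ :=
  sSup ((fun x : Site d => (coord0 x : ℝ)) '' bpCluster k ℓ η)

/-- The test function `f`, computed on the restriction to `[-ℓ,ℓ]^d`. -/
def fTest (d k ℓ : ℕ) (η : Config d) : ℝ :=
  bpRightmost k ℓ (fillOutside (bigBox d ℓ) η)

/-- The event `B` : the bootstrap percolation cluster of the origin contains a
site of `ℓ^∞`-norm at least `ℓ - 1`. -/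
def Bevent (k ℓ : ℕ) (η : Config d) : Prop :=
  ∃ x ∈ bpCluster k ℓ η, ∃ i, (ℓ : ℤ) - 1 ≤ |x i|

/-!
Away from the boundary of `[-ℓ,ℓ]^d`, an allowed exchange `η ↦ η^{xy}` does not change `BP^∞`:
the moving particle has `k - 1` empty neighbours besides its empty partner site, so bootstrap
percolation removes it in its first step, both before and after the move. Near the boundary, the
clusters of the origin for `η` and `η^{xy}` can only differ if one of them reaches `x` or `y`,
which realises `B`. Hence `f(η^{xy}) ≠ f(η)` forces `B` for `η` or for `η^{xy}`. The event `B` is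
decreasing and depends only on the box, so conditioning on an occupied origin does not increase
its probability, and neither does the exchange of two sites. Since `0 ≤ f ≤ ℓ`, each of the
`O(d ℓ^d)` edges meeting the box contributes at most `2 ℓ² μ(B)`.
-/

section Lattice

variable {x y z : Site d}

lemma adj.ne (h : adj x y) : x ≠ y := by
  rintro rfl; simp [adj] at h

lemma adj.symm (h : adj x y) : adj y x := by
  simpa only [adj, abs_sub_comm] using h

lemma adj.abs_sub_le (h : adj x y) (i : Fin d) : |x i - y i| ≤ 1 :=
  h ▸ Finset.single_le_sum (f := fun j => |x j - y j|) (fun _ _ => abs_nonneg _) (Finset.mem_univ i)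

lemma adj_of_mem_neighbors (h : z ∈ neighbors x) : adj x z := by
  obtain ⟨⟨i, s⟩, -, rfl⟩ := Finset.mem_image.mp h
  unfold adj
  rw [Finset.sum_eq_single i (fun j _ hj => by simp [Function.update_of_ne hj]) (by simp)]
  cases s <;> simp

lemma mem_neighbors_of_adj (h : adj x y) : y ∈ neighbors x := by
  obtain ⟨i, hi⟩ := Function.ne_iff.mp h.ne
  have hsplit := Finset.add_sum_erase Finset.univ (fun j => |x j - y j|) (Finset.mem_univ i)
  have hi1 : 1 ≤ |x i - y i| := Int.one_le_abs (sub_ne_zero.mpr hi)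
  have hrest : ∀ j ≠ i, y j = x j := fun j hj => by
    have := Finset.single_le_sum (fun l _ => abs_nonneg (x l - y l))
      (Finset.mem_erase.mpr ⟨hj, Finset.mem_univ j⟩)
    have : |x j - y j| ≤ 0 := by unfold adj at h; linarith
    linarith [abs_nonpos_iff.mp this]
  have hyi : y i = x i + 1 ∨ y i = x i + -1 := by
    rcases abs_cases (x i - y i) with ⟨h1, -⟩ | ⟨h1, -⟩ <;>
      · have := h.abs_sub_le i; omega
  refine Finset.mem_image.mpr ⟨(i, y i = x i + 1), Finset.mem_univ _, funext fun j => ?_⟩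
  rcases eq_or_ne j i with rfl | hj
  · rcases hyi with hyi | hyi <;> simp [hyi]
  · simp [Function.update_of_ne hj, hrest j hj]

lemma card_neighbors_le (x : Site d) : (neighbors x).card ≤ 2 * d :=
  Finset.card_image_le.trans (by simp [mul_comm])

end Lattice

lemma bool_le_of_eq_false_imp {a b : Bool} (h : b = false → a = false) : a ≤ b := by
  cases a <;> cases b <;> simp_all

lemma bool_eq_false_of_le {a b : Bool} (h : a ≤ b) (hb : b = false) : a = false := by
  revert h hb; cases a <;> cases b <;> decide

section Bootstrap

variable {k ℓ : ℕ} {η η' : Config d} {x : Site d}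

def boxEmptyNeighbors (ℓ : ℕ) (η : Config d) (x : Site d) : Finset (Site d) :=
  (neighbors x).filter fun z => z ∈ bigBox d ℓ ∧ η z = false

lemma boxEmptyNeighbors_subset (h : ∀ z ∈ boxEmptyNeighbors ℓ η x, η' z = false) :
    boxEmptyNeighbors ℓ η x ⊆ boxEmptyNeighbors ℓ η' x := fun z hz => by
  have hz' := Finset.mem_filter.mp hz
  exact Finset.mem_filter.mpr ⟨hz'.1, hz'.2.1, h z hz⟩

lemma BPstep_eq_false_iff :
    BPstep k ℓ η x = false ↔
      η x = false ∨ x ∈ bigBox d ℓ ∧ k ≤ (boxEmptyNeighbors ℓ η x).card := by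
  unfold BPstep boxEmptyNeighbors
  by_cases hx : x ∈ bigBox d ℓ <;> cases η x <;> simp [hx]

lemma BPstep_le (η : Config d) : BPstep k ℓ η ≤ η := fun _ =>
  bool_le_of_eq_false_imp fun h => BPstep_eq_false_iff.mpr (Or.inl h)

lemma BPstep_mono : Monotone (BPstep k ℓ : Config d → Config d) := fun η η' h x => by
  refine bool_le_of_eq_false_imp fun hx => ?_
  rcases BPstep_eq_false_iff.mp hx with hx | ⟨hbox, hcard⟩
  · exact BPstep_eq_false_iff.mpr (Or.inl (bool_eq_false_of_le (h x) hx))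
  · refine BPstep_eq_false_iff.mpr (Or.inr ⟨hbox, hcard.trans (Finset.card_le_card ?_)⟩)
    exact boxEmptyNeighbors_subset fun z hz =>
      bool_eq_false_of_le (h z) (Finset.mem_filter.mp hz).2.2

lemma BPstep_iterate_antitone (η : Config d) :
    Antitone fun t => (BPstep k ℓ)^[t] η :=
  antitone_nat_of_succ_le fun t => by
    rw [Function.iterate_succ_apply']; exact BPstep_le _

lemma BPinf_eq_false_iff : BPinf k ℓ η x = false ↔ ∃ t, (BPstep k ℓ)^[t] η x = false := by
  simp [BPinf]

lemma BPinf_le (η : Config d) : BPinf k ℓ η ≤ η := fun _ =>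
  bool_le_of_eq_false_imp fun h => BPinf_eq_false_iff.mpr ⟨0, h⟩

lemma BPinf_mono : Monotone (BPinf k ℓ : Config d → Config d) := fun η η' h x =>
  bool_le_of_eq_false_imp fun hx => by
    obtain ⟨t, ht⟩ := BPinf_eq_false_iff.mp hx
    exact BPinf_eq_false_iff.mpr ⟨t, bool_eq_false_of_le (BPstep_mono.iterate t h x) ht⟩

lemma BPinf_BPstep (η : Config d) : BPinf k ℓ (BPstep k ℓ η) = BPinf k ℓ η := by
  refine le_antisymm (BPinf_mono (BPstep_le η)) fun x => bool_le_of_eq_false_imp fun hx => ?_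
  obtain ⟨t, ht⟩ := BPinf_eq_false_iff.mp hx
  exact BPinf_eq_false_iff.mpr ⟨t + 1, by rwa [Function.iterate_succ_apply]⟩

lemma BPinf_update_false (h : BPstep k ℓ η x = false) :
    BPinf k ℓ (Function.update η x false) = BPinf k ℓ η := by
  refine le_antisymm (BPinf_mono ?_) ?_
  · exact update_le_iff.mpr ⟨Bool.false_le _, fun _ _ => le_rfl⟩
  · rw [← BPinf_BPstep η]
    exact BPinf_mono (le_update_iff.mpr ⟨h.le, fun z _ => BPstep_le η z⟩)

lemma BPinf_eq_false_of_le_card (hx : x ∈ bigBox d ℓ)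
    (h : k ≤ (boxEmptyNeighbors ℓ (BPinf k ℓ η) x).card) : BPinf k ℓ η x = false := by
  have : ∀ z, ∃ t, z ∈ boxEmptyNeighbors ℓ (BPinf k ℓ η) x → (BPstep k ℓ)^[t] η z = false :=
    fun z => by
      by_cases hz : z ∈ boxEmptyNeighbors ℓ (BPinf k ℓ η) x
      · obtain ⟨t, ht⟩ := BPinf_eq_false_iff.mp (Finset.mem_filter.mp hz).2.2
        exact ⟨t, fun _ => ht⟩
      · exact ⟨0, fun h => absurd h hz⟩
  choose t ht using this
  set T := (boxEmptyNeighbors ℓ (BPinf k ℓ η) x).sup t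
  refine BPinf_eq_false_iff.mpr ⟨T + 1, ?_⟩
  rw [Function.iterate_succ_apply', BPstep_eq_false_iff]
  refine Or.inr ⟨hx, h.trans (Finset.card_le_card (boxEmptyNeighbors_subset fun z hz => ?_))⟩
  exact bool_eq_false_of_le (BPstep_iterate_antitone η (Finset.le_sup hz) z) (ht z hz)

end Bootstrap

section Cluster

variable {k ℓ : ℕ} {η η' ξ ξ' : Config d} {z : Site d}

lemma bpCluster_subset_bigBox : bpCluster k ℓ η ⊆ bigBox d ℓ := fun _ hz => by
  induction hz with
  | refl => intro i; simp [origin]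
  | tail _ h _ => exact h.2.1

lemma bpCluster_anti : Antitone (bpCluster k ℓ : Config d → Set (Site d)) :=
  fun _ _ h _ => Relation.ReflTransGen.mono (fun _ b hab =>
    ⟨hab.1, hab.2.1, bool_eq_false_of_le (BPinf_mono h b) hab.2.2⟩) _ _

lemma bpCluster_congr (h : BPinf k ℓ η = BPinf k ℓ η') : bpCluster k ℓ η = bpCluster k ℓ η' := by
  unfold bpCluster bpRel; rw [h]

lemma exists_ne_of_iterate_eq_false {n : ℕ} (hn : (BPstep k ℓ)^[n] ξ' z = false)
    (hz : BPinf k ℓ ξ z = true) :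
    ∃ w, ξ w ≠ ξ' w ∧ Relation.ReflTransGen (bpRel k ℓ ξ') z w := by
  induction n generalizing z with
  | zero =>
    have : ξ z = true := Bool.le_iff_imp.mp (BPinf_le ξ z) hz
    exact ⟨z, by simp_all, .refl⟩
  | succ n ih =>
    rw [Function.iterate_succ_apply', BPstep_eq_false_iff] at hn
    rcases hn with hn | ⟨hbox, hcard⟩
    · exact ih hn hz
    obtain ⟨w, hw, hξw⟩ : ∃ w ∈ boxEmptyNeighbors ℓ ((BPstep k ℓ)^[n] ξ') z,
        BPinf k ℓ ξ w = true := by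
      by_contra! hall
      have := BPinf_eq_false_of_le_card (η := ξ) hbox (hcard.trans (Finset.card_le_card
        (boxEmptyNeighbors_subset fun w hw => by simpa using hall w hw)))
      simp [hz] at this
    obtain ⟨hwz, hwbox, hwn⟩ := Finset.mem_filter.mp hw
    obtain ⟨v, hv, hpath⟩ := ih hwn hξw
    exact ⟨v, hv, .head ⟨adj_of_mem_neighbors hwz, hwbox, BPinf_eq_false_iff.mpr ⟨n, hwn⟩⟩ hpath⟩

lemma bpCluster_subset_of_eqOn (h : ∀ w ∈ bpCluster k ℓ ξ', ξ w = ξ' w) :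
    bpCluster k ℓ ξ' ⊆ bpCluster k ℓ ξ := fun _ hz => by
  induction hz with
  | refl => exact .refl
  | @tail b c hb hbc ih =>
    obtain ⟨hadj, hbox, hc⟩ := hbc
    refine ih.tail ⟨hadj, hbox, ?_⟩
    by_contra hξc
    obtain ⟨t, ht⟩ := BPinf_eq_false_iff.mp hc
    obtain ⟨w, hw, hpath⟩ := exists_ne_of_iterate_eq_false ht (by simpa using hξc)
    exact hw (h w ((hb.tail ⟨hadj, hbox, hc⟩).trans hpath))

end Cluster

section Swap

variable {k ℓ : ℕ} {V : Set (Site d)} {η : Config d} {x y z : Site d}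

lemma swap_eq_comp (η : Config d) (x y : Site d) : swap η x y = η ∘ Equiv.swap x y := by
  funext z
  simp only [swap, Function.comp, Equiv.swap_apply_def]
  split_ifs <;> rfl

lemma swap_apply_of_ne (hx : z ≠ x) (hy : z ≠ y) : swap η x y z = η z := by
  simp [swap, hx, hy]

lemma swap_of_eq (h : η x = η y) : swap η x y = η := by
  funext z
  unfold swap
  split_ifs with h1 h2
  · rw [h1, h]
  · rw [h2, h]
  · rfl

lemma constraint_swap (h : constraint k η x y) : constraint k (swap η x y) x y := by
  have key : ∀ a b, a = x ∧ b = y ∨ a = y ∧ b = x →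
      ((neighbors a).filter fun z => z ≠ b ∧ swap η x y z = false) =
        (neighbors a).filter fun z => z ≠ b ∧ η z = false := by
    refine fun a b hab => Finset.filter_congr fun z hz => and_congr_right fun hzb => ?_
    have hza : z ≠ a := (adj_of_mem_neighbors hz).ne.symm
    rcases hab with ⟨rfl, rfl⟩ | ⟨rfl, rfl⟩ <;> simp [swap_apply_of_ne, *]
  exact ⟨key x y (.inl ⟨rfl, rfl⟩) ▸ h.1, key y x (.inr ⟨rfl, rfl⟩) ▸ h.2⟩

lemma fillOutside_swap_apply_of_ne (hx : z ≠ x) (hy : z ≠ y) :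
    fillOutside V (swap η x y) z = fillOutside V η z := by
  simp [fillOutside, swap_apply_of_ne hx hy]

lemma fillOutside_swap_of_not_mem (hx : x ∉ V) (hy : y ∉ V) :
    fillOutside V (swap η x y) = fillOutside V η := by
  funext z
  by_cases hz : z ∈ V
  · exact fillOutside_swap_apply_of_ne (by rintro rfl; exact hx hz) (by rintro rfl; exact hy hz)
  · simp [fillOutside, hz]

lemma mem_bigBox_of_adj (hx : ∀ i, |x i| < ℓ) (h : adj x z) : z ∈ bigBox d ℓ := fun i => by
  have := abs_sub_abs_le_abs_sub (z i) (x i)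
  have := h.symm.abs_sub_le i
  have := hx i
  omega

lemma BPstep_fillOutside_eq_false (hx : ∀ i, |x i| < ℓ) (hxy : adj x y) (hy : η y = false)
    (hc : k - 1 ≤ ((neighbors x).filter fun z => z ≠ y ∧ η z = false).card) :
    BPstep k ℓ (fillOutside (bigBox d ℓ) η) x = false := by
  refine BPstep_eq_false_iff.mpr (Or.inr ⟨fun i => (hx i).le, ?_⟩)
  have hsub : insert y ((neighbors x).filter fun z => z ≠ y ∧ η z = false) ⊆
      boxEmptyNeighbors ℓ (fillOutside (bigBox d ℓ) η) x := by
    intro z hz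
    rcases Finset.mem_insert.mp hz with rfl | hz
    · exact Finset.mem_filter.mpr ⟨mem_neighbors_of_adj hxy, mem_bigBox_of_adj hx hxy,
        by simp [fillOutside, mem_bigBox_of_adj hx hxy, hy]⟩
    · obtain ⟨hzx, -, hz⟩ := Finset.mem_filter.mp hz
      have hbox := mem_bigBox_of_adj hx (adj_of_mem_neighbors hzx)
      exact Finset.mem_filter.mpr ⟨hzx, hbox, by simp [fillOutside, hbox, hz]⟩
  have := Finset.card_le_card hsub
  rw [Finset.card_insert_of_notMem (by simp)] at this
  omega

lemma BPinf_fillOutside_update (hx : ∀ i, |x i| < ℓ) (hxy : adj x y) (hy : η y = false)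
    (hc : k - 1 ≤ ((neighbors x).filter fun z => z ≠ y ∧ η z = false).card) :
    BPinf k ℓ (Function.update (Function.update (fillOutside (bigBox d ℓ) η) x false) y false) =
      BPinf k ℓ (fillOutside (bigBox d ℓ) η) := by
  have : Function.update (fillOutside (bigBox d ℓ) η) x false y = false := by
    simp [Function.update_of_ne hxy.ne.symm, fillOutside, mem_bigBox_of_adj hx hxy, hy]
  rw [Function.update_eq_self_iff.mpr this.symm,
    BPinf_update_false (BPstep_fillOutside_eq_false hx hxy hy hc)]

lemma BPinf_fillOutside_swap (hx : ∀ i, |x i| < ℓ) (hy : ∀ i, |y i| < ℓ) (hxy : adj x y)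
    (hc : constraint k η x y) :
    BPinf k ℓ (fillOutside (bigBox d ℓ) (swap η x y)) = BPinf k ℓ (fillOutside (bigBox d ℓ) η) := by
  by_cases hxy' : η x = η y
  · rw [swap_of_eq hxy']
  have key : ∀ η' : Config d, constraint k η' x y → η' x = false ∨ η' y = false →
      BPinf k ℓ (Function.update (Function.update (fillOutside (bigBox d ℓ) η') x false) y false) =
        BPinf k ℓ (fillOutside (bigBox d ℓ) η') := by
    rintro η' hc' (h | h)
    · rw [Function.update_comm hxy.ne]
      exact BPinf_fillOutside_update hy hxy.symm h hc'.2
    · exact BPinf_fillOutside_update hx hxy h hc'.1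
  have hsame : Function.update (Function.update (fillOutside (bigBox d ℓ) (swap η x y)) x false)
      y false = Function.update (Function.update (fillOutside (bigBox d ℓ) η) x false) y false := by
    funext z
    by_cases hzy : z = y
    · simp [hzy]
    by_cases hzx : z = x
    · simp [hzx, hxy.ne]
    simp [Function.update_of_ne, hzx, hzy, fillOutside_swap_apply_of_ne hzx hzy]
  have hempty : η x = false ∨ η y = false := by
    cases h1 : η x <;> cases h2 : η y <;> simp_all
  rw [← key _ (constraint_swap hc) ?_, hsame, key η hc hempty]
  simpa [swap, hxy.ne.symm] using hempty.symm

lemma fTest_mem_Icc (η : Config d) : fTest d k ℓ η ∈ Set.Icc 0 (ℓ : ℝ) := by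
  set X := (fun x : Site d => (coord0 x : ℝ)) '' bpCluster k ℓ (fillOutside (bigBox d ℓ) η)
  have h0 : (0 : ℝ) ∈ X := ⟨origin, .refl, by simp [coord0, origin]⟩
  have hle : ∀ v ∈ X, v ≤ ℓ := by
    rintro _ ⟨x, hx, rfl⟩
    have hbox := bpCluster_subset_bigBox hx
    simp only [coord0]
    split_ifs with hd
    · exact_mod_cast (abs_le.mp (hbox ⟨0, hd⟩)).2
    · simp
  exact ⟨le_csSup ⟨ℓ, hle⟩ h0, csSup_le ⟨0, h0⟩ hle⟩

lemma fTest_swap_eq (hxy : adj x y) (hc : constraint k η x y)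
    (hB : ¬ Bevent k ℓ (fillOutside (bigBox d ℓ) η))
    (hB' : ¬ Bevent k ℓ (fillOutside (bigBox d ℓ) (swap η x y))) :
    fTest d k ℓ (swap η x y) = fTest d k ℓ η := by
  suffices bpCluster k ℓ (fillOutside (bigBox d ℓ) (swap η x y)) =
      bpCluster k ℓ (fillOutside (bigBox d ℓ) η) by simp only [fTest, bpRightmost, this]
  by_cases hdeep : (∀ i, |x i| < ℓ) ∧ ∀ i, |y i| < ℓ
  · exact bpCluster_congr (BPinf_fillOutside_swap hdeep.1 hdeep.2 hxy hc)
  obtain ⟨i, hi⟩ : ∃ i, (ℓ : ℤ) ≤ |x i| ∨ (ℓ : ℤ) ≤ |y i| := by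
    by_contra! h
    exact hdeep ⟨fun i => (h i).1, fun i => (h i).2⟩
  have hfar : ∀ w, fillOutside (bigBox d ℓ) (swap η x y) w ≠ fillOutside (bigBox d ℓ) η w →
      (ℓ : ℤ) - 1 ≤ |w i| := by
    intro w hw
    have h1 := hxy.abs_sub_le i
    have h2 := abs_sub_abs_le_abs_sub (x i) (y i)
    have h3 := abs_sub_abs_le_abs_sub (y i) (x i)
    rw [abs_sub_comm (y i)] at h3
    by_cases hwx : w = x
    · subst hwx; omega
    by_cases hwy : w = y
    · subst hwy; omega
    exact absurd (fillOutside_swap_apply_of_ne hwx hwy) hw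
  refine subset_antisymm (bpCluster_subset_of_eqOn fun w hw => ?_)
    (bpCluster_subset_of_eqOn fun w hw => ?_)
  · by_contra hne
    exact hB' ⟨w, hw, i, hfar w (Ne.symm hne)⟩
  · by_contra hne
    exact hB ⟨w, hw, i, hfar w hne⟩

lemma fTest_swap_of_not_mem (hx : x ∉ bigBox d ℓ) (hy : y ∉ bigBox d ℓ) (η : Config d) :
    fTest d k ℓ (swap η x y) = fTest d k ℓ η := by
  simp only [fTest, fillOutside_swap_of_not_mem hx hy]

end Swap

section Measure

variable {q : ℝ} {μ ν : Measure (Config d)} {S : Finset (Site d)} {A : Set (Config d)}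
  {w : Site d}

def cyl (S : Finset (Site d)) (ζ : Config d) : Set (Config d) := {η | ∀ x ∈ S, η x = ζ x}

def DeterminedBy (S : Finset (Site d)) (A : Set (Config d)) : Prop :=
  ∀ η η' : Config d, (∀ x ∈ S, η x = η' x) → η ∈ A → η' ∈ A

def extend (S : Finset (Site d)) (g : S → Bool) : Config d :=
  fun z => if h : z ∈ S then g ⟨z, h⟩ else true

lemma measurableSet_cyl (S : Finset (Site d)) (ζ : Config d) : MeasurableSet (cyl S ζ) := by
  have : cyl S ζ = ⋂ x ∈ S, (fun η : Config d => η x) ⁻¹' {ζ x} := by ext; simp [cyl]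
  exact this ▸ .biInter S.countable_toSet fun x _ =>
    measurable_pi_apply x (measurableSet_singleton _)

lemma DeterminedBy.eq_biUnion (hA : DeterminedBy S A) :
    A = ⋃ g ∈ Finset.univ.filter (extend S · ∈ A), cyl S (extend S g) := by
  ext η
  simp only [Set.mem_iUnion, Finset.mem_filter, Finset.mem_univ, true_and, exists_prop]
  refine ⟨fun hη => ⟨fun z => η z, hA _ _ (fun x hx => by simp [extend, hx]) hη,
    fun x hx => by simp [extend, hx]⟩, fun ⟨g, hg, hη⟩ => hA _ _ (fun x hx => (hη x hx).symm) hg⟩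

lemma pairwiseDisjoint_cyl_extend (T : Finset (S → Bool)) :
    (T : Set (S → Bool)).PairwiseDisjoint fun g => cyl S (extend S g) := by
  refine fun g _ g' _ hne => Set.disjoint_left.mpr fun η h h' => hne (funext fun z => ?_)
  simpa [extend] using (h z z.2).symm.trans (h' z z.2)

lemma DeterminedBy.measurableSet (hA : DeterminedBy S A) : MeasurableSet A :=
  hA.eq_biUnion ▸ Finset.measurableSet_biUnion _ fun _ _ => measurableSet_cyl _ _

lemma DeterminedBy.measure_eq_mul {c : ℝ≥0∞} (hA : DeterminedBy S A)
    (h : ∀ ζ, ν (cyl S ζ) = c * μ (cyl S ζ)) : ν A = c * μ A := by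
  rw [hA.eq_biUnion, measure_biUnion_finset (pairwiseDisjoint_cyl_extend _)
      fun _ _ => measurableSet_cyl _ _,
    measure_biUnion_finset (pairwiseDisjoint_cyl_extend _) fun _ _ => measurableSet_cyl _ _,
    Finset.mul_sum]
  exact Finset.sum_congr rfl fun g _ => h _

lemma DeterminedBy.inter_occupied (hA : DeterminedBy S A) (w : Site d) :
    DeterminedBy (insert w S) (A ∩ {η | η w = true}) := fun η η' h ⟨hη, hw⟩ =>
  ⟨hA η η' (fun x hx => h x (Finset.mem_insert_of_mem hx)) hη,
    (h w (Finset.mem_insert_self w S)).symm.trans hw⟩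

lemma IsBernoulliProduct.measure_cyl (hμ : IsBernoulliProduct q μ) (S : Finset (Site d))
    (ζ : Config d) : μ (cyl S ζ) = ∏ x ∈ S, ENNReal.ofReal (if ζ x then 1 - q else q) :=
  hμ.2 S ζ

lemma IsBernoulliProduct.measure_inter_occupied (hμ : IsBernoulliProduct q μ)
    (hA : DeterminedBy S A) (hw : w ∉ S) :
    μ (A ∩ {η | η w = true}) = ENNReal.ofReal (1 - q) * μ A := by
  rw [← Measure.restrict_apply hA.measurableSet]
  refine hA.measure_eq_mul fun ζ => ?_
  have hS : ∀ x ∈ S, Function.update ζ w true x = ζ x := fun x hx =>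
    Function.update_of_ne (by rintro rfl; exact hw hx) _ _
  have : cyl S ζ ∩ {η | η w = true} = cyl (insert w S) (Function.update ζ w true) := by
    ext η
    simp +contextual [cyl, hS, and_comm]
  rw [Measure.restrict_apply (measurableSet_cyl _ _), this, hμ.measure_cyl, hμ.measure_cyl,
    Finset.prod_insert hw, Function.update_self, if_pos rfl]
  exact congrArg _ (Finset.prod_congr rfl fun x hx => by rw [hS x hx])

lemma measurable_comp_perm (σ : Equiv.Perm (Site d)) :
    Measurable fun η : Config d => η ∘ σ :=
  measurable_pi_lambda _ fun z => measurable_pi_apply (σ z)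

lemma IsBernoulliProduct.measure_preimage_perm (hμ : IsBernoulliProduct q μ)
    (hA : DeterminedBy S A) (σ : Equiv.Perm (Site d)) :
    μ ((fun η : Config d => η ∘ σ) ⁻¹' A) = μ A := by
  rw [← Measure.map_apply (measurable_comp_perm σ) hA.measurableSet, ← one_mul (μ A)]
  refine hA.measure_eq_mul fun ζ => ?_
  have : (fun η : Config d => η ∘ σ) ⁻¹' cyl S ζ = cyl (S.map σ.toEmbedding) (ζ ∘ σ.symm) := by
    ext η
    simp only [cyl, Set.mem_preimage, Function.comp_apply, Finset.mem_map_equiv]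
    exact ⟨fun h x hx => by simpa using h _ hx,
      fun h x hx => by simpa using h (σ x) (by simpa using hx)⟩
  rw [Measure.map_apply (measurable_comp_perm σ) (measurableSet_cyl _ _), this, hμ.measure_cyl,
    hμ.measure_cyl, Finset.prod_map, one_mul]
  simp

lemma IsBernoulliProduct.measure_inter_occupied_le (hμ : IsBernoulliProduct q μ)
    (hA : DeterminedBy S A) (hlow : IsLowerSet A) (w : Site d) :
    μ (A ∩ {η | η w = true}) ≤ ENNReal.ofReal (1 - q) * μ A := by
  set A' := (fun η : Config d => Function.update η w true) ⁻¹' A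
  have hA' : DeterminedBy (S.erase w) A' := fun η η' h hη => by
    refine hA _ _ (fun x hx => ?_) hη
    by_cases hxw : x = w
    · simp [hxw]
    · simpa [hxw] using h x (Finset.mem_erase.mpr ⟨hxw, hx⟩)
  have hAA' : A ∩ {η | η w = true} = A' ∩ {η | η w = true} := by
    ext η
    simp only [A', Set.mem_inter_iff, Set.mem_preimage]
    exact and_congr_left fun hw => by rw [← hw, Function.update_eq_self]
  rw [hAA', hμ.measure_inter_occupied hA' (Finset.notMem_erase w S)]
  exact mul_le_mul_right (measure_mono fun η hη =>
    hlow (le_update_iff.mpr ⟨Bool.le_true _, fun _ _ => le_rfl⟩) hη) _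

lemma measurableSet_occupied (w : Site d) : MeasurableSet {η : Config d | η w = true} :=
  show MeasurableSet ((fun η : Config d => η w) ⁻¹' {true}) from
    measurable_pi_apply w (measurableSet_singleton true)

lemma IsBernoulliProduct.measure_occupied (hμ : IsBernoulliProduct q μ) (w : Site d) :
    μ {η | η w = true} = ENNReal.ofReal (1 - q) := by
  simpa [cyl] using hμ.measure_cyl {w} fun _ => true

lemma IsBernoulliProduct.condOcc_preimage_perm_le (hμ : IsBernoulliProduct q μ) (hq : q < 1)
    (hA : DeterminedBy S A) (hlow : IsLowerSet A) (σ : Equiv.Perm (Site d)) :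
    condOcc μ ((fun η : Config d => η ∘ σ) ⁻¹' A) ≤ μ A := by
  have hset : {η : Config d | η origin = true} ∩ (fun η : Config d => η ∘ σ) ⁻¹' A =
      (fun η : Config d => η ∘ σ) ⁻¹' (A ∩ {η | η (σ.symm origin) = true}) := by
    ext η
    simp [and_comm]
  have hq' : ENNReal.ofReal (1 - q) ≠ 0 := by simpa using hq
  rw [condOcc, ProbabilityTheory.cond_apply (measurableSet_occupied origin), hset,
    hμ.measure_preimage_perm (hA.inter_occupied _), hμ.measure_occupied]
  calc (ENNReal.ofReal (1 - q))⁻¹ * μ (A ∩ {η | η (σ.symm origin) = true})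
      ≤ (ENNReal.ofReal (1 - q))⁻¹ * (ENNReal.ofReal (1 - q) * μ A) :=
        mul_le_mul_right (hμ.measure_inter_occupied_le hA hlow _) _
    _ = μ A := ENNReal.inv_mul_cancel_left hq' ENNReal.ofReal_ne_top

end Measure

section Estimate

variable {k ℓ : ℕ} {q : ℝ} {μ : Measure (Config d)} {x y : Site d}

def cube (d r : ℕ) : Finset (Site d) := Fintype.piFinset fun _ => Finset.Icc (-(r : ℤ)) r

lemma mem_cube {r : ℕ} : x ∈ cube d r ↔ ∀ i, |x i| ≤ r := by
  simp [cube, abs_le]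

lemma card_cube (d r : ℕ) : (cube d r).card = (2 * r + 1) ^ d := by
  simp only [cube, Fintype.card_piFinset, Int.card_Icc, Finset.prod_const, Finset.card_univ,
    Fintype.card_fin]
  congr 1
  omega

lemma determinedBy_Bevent :
    DeterminedBy (cube d ℓ) {η : Config d | Bevent k ℓ (fillOutside (bigBox d ℓ) η)} :=
  fun η η' h hη => by
    have : fillOutside (bigBox d ℓ) η = fillOutside (bigBox d ℓ) η' := by
      funext z
      by_cases hz : z ∈ bigBox d ℓ
      · simp [fillOutside, hz, h z (mem_cube.mpr hz)]
      · simp [fillOutside, hz]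
    simpa [this] using hη

lemma isLowerSet_Bevent : IsLowerSet {η : Config d | Bevent k ℓ (fillOutside (bigBox d ℓ) η)} :=
  fun η η' h ⟨z, hz, hzB⟩ => by
    have hfill : fillOutside (bigBox d ℓ) η' ≤ fillOutside (bigBox d ℓ) η := fun z => by
      by_cases hz : z ∈ bigBox d ℓ
      · simpa [fillOutside, hz] using h z
      · simp [fillOutside, hz]
    exact ⟨z, bpCluster_anti hfill hz, hzB⟩

lemma lintegral_edge_le (hμ : IsBernoulliProduct q μ) (hq : q < 1) (hxy : adj x y) :
    ∫⁻ η, cval k η x y * ENNReal.ofReal ((fTest d k ℓ (swap η x y) - fTest d k ℓ η) ^ 2)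
        ∂(condOcc μ) ≤
      2 * ENNReal.ofReal ((ℓ : ℝ) ^ 2) * μ {η | Bevent k ℓ (fillOutside (bigBox d ℓ) η)} := by
  set B := {η : Config d | Bevent k ℓ (fillOutside (bigBox d ℓ) η)}
  set G := B ∪ (fun η : Config d => η ∘ Equiv.swap x y) ⁻¹' B
  have hpt : ∀ η, cval k η x y * ENNReal.ofReal ((fTest d k ℓ (swap η x y) - fTest d k ℓ η) ^ 2)
      ≤ G.indicator (fun _ => ENNReal.ofReal ((ℓ : ℝ) ^ 2)) η := by
    intro η
    by_cases hη : η ∈ G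
    · rw [Set.indicator_of_mem hη]
      have h1 := fTest_mem_Icc (k := k) (ℓ := ℓ) (swap η x y)
      have h2 := fTest_mem_Icc (k := k) (ℓ := ℓ) η
      refine mul_le_of_le_one_of_le (by unfold cval; split_ifs <;> simp)
        (ENNReal.ofReal_le_ofReal (sq_le_sq' ?_ ?_)) <;> linarith [h1.1, h1.2, h2.1, h2.2]
    · rw [Set.indicator_of_notMem hη]
      by_cases hc : constraint k η x y
      · have hB : η ∉ B := fun h => hη (.inl h)
        have hB' : swap η x y ∉ B := fun h => hη (.inr (by simpa [swap_eq_comp] using h))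
        simp [fTest_swap_eq hxy hc hB hB']
      · simp [cval, hc]
  have hbound : ∀ σ : Equiv.Perm (Site d), condOcc μ ((fun η => η ∘ σ) ⁻¹' B) ≤ μ B :=
    hμ.condOcc_preimage_perm_le hq determinedBy_Bevent isLowerSet_Bevent
  calc _ ≤ ∫⁻ η, G.indicator (fun _ => ENNReal.ofReal ((ℓ : ℝ) ^ 2)) η ∂(condOcc μ) :=
        lintegral_mono hpt
    _ ≤ ENNReal.ofReal ((ℓ : ℝ) ^ 2) * condOcc μ G := lintegral_indicator_const_le _ _
    _ ≤ ENNReal.ofReal ((ℓ : ℝ) ^ 2) * (μ B + μ B) := by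
        refine mul_le_mul_right ((measure_union_le _ _).trans (add_le_add ?_ (hbound _))) _
        simpa using hbound (Equiv.refl _)
    _ = 2 * ENNReal.ofReal ((ℓ : ℝ) ^ 2) * μ B := by ring

lemma tsum_le_of_adj {F : Site d × Site d → ℝ≥0∞} {r : ℕ} {b : ℝ≥0∞}
    (hF : ∀ x y, F (x, y) ≠ 0 → adj x y ∧ x ∈ cube d r) (hb : ∀ p, F p ≤ b) :
    ∑' p, F p ≤ ((2 * r + 1) ^ d * (2 * d) : ℕ) * b := by
  set K := (cube d r).biUnion fun x => (neighbors x).image (Prod.mk x)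
  have hK : K.card ≤ (2 * r + 1) ^ d * (2 * d) := card_cube d r ▸
    Finset.card_biUnion_le_card_mul _ _ _ fun x _ =>
      Finset.card_image_le.trans (card_neighbors_le x)
  rw [tsum_eq_sum (s := K) fun p hp => ?_]
  · calc ∑ p ∈ K, F p ≤ K.card • b := Finset.sum_le_card_nsmul _ _ _ fun p _ => hb p
      _ ≤ _ := by rw [nsmul_eq_mul]; gcongr
  · by_contra h
    obtain ⟨hadj, hx⟩ := hF p.1 p.2 h
    exact hp (Finset.mem_biUnion.mpr
      ⟨p.1, hx, Finset.mem_image.mpr ⟨p.2, mem_neighbors_of_adj hadj, rfl⟩⟩)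

lemma lintegral_edge_eq_zero (hxy : adj x y) (hx : x ∉ cube d (ℓ + 1)) :
    ∫⁻ η, cval k η x y * ENNReal.ofReal ((fTest d k ℓ (swap η x y) - fTest d k ℓ η) ^ 2) ∂μ =
      0 := by
  obtain ⟨i, hi⟩ : ∃ i, (ℓ : ℤ) + 1 < |x i| := by simpa [mem_cube] using hx
  have hxB : x ∉ bigBox d ℓ := fun h => by have := h i; omega
  have hyB : y ∉ bigBox d ℓ := fun h => by
    have h1 := h i
    have h2 := hxy.abs_sub_le i
    have h3 := abs_sub_abs_le_abs_sub (x i) (y i)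
    omega
  simp [fTest_swap_of_not_mem hxB hyB]

lemma card_edges_mul_le (d ℓ : ℕ) :
    (((2 * (ℓ + 1) + 1) ^ d * (2 * d) : ℕ) : ℝ) * (2 * (ℓ : ℝ) ^ 2) ≤
      4 * (d + 1) * 5 ^ d * (ℓ : ℝ) ^ (d + 2) := by
  have hpow : (2 * (ℓ + 1) + 1) ^ d * ℓ ^ 2 ≤ 5 ^ d * ℓ ^ (d + 2) := by
    rcases Nat.eq_zero_or_pos ℓ with rfl | hℓ
    · simp
    calc (2 * (ℓ + 1) + 1) ^ d * ℓ ^ 2 ≤ (5 * ℓ) ^ d * ℓ ^ 2 := by gcongr; omega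
      _ = 5 ^ d * ℓ ^ (d + 2) := by ring
  have : (2 * (ℓ + 1) + 1) ^ d * (2 * d) * (2 * ℓ ^ 2) ≤ 4 * (d + 1) * 5 ^ d * ℓ ^ (d + 2) := by
    calc (2 * (ℓ + 1) + 1) ^ d * (2 * d) * (2 * ℓ ^ 2)
        = 4 * d * ((2 * (ℓ + 1) + 1) ^ d * ℓ ^ 2) := by ring
      _ ≤ 4 * (d + 1) * (5 ^ d * ℓ ^ (d + 2)) := by gcongr; omega
      _ = 4 * (d + 1) * 5 ^ d * ℓ ^ (d + 2) := by ring
  exact_mod_cast this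

end Estimate

theorem statement17_general (d : ℕ) :
    ∃ C : ℝ, 0 < C ∧
      ∀ k ℓ : ℕ, 2 ≤ k → k ≤ d → ∀ q : ℝ, 0 < q → q < 1 →
        ∀ μ : Measure (Config d), IsBernoulliProduct q μ →
          ∀ γ : ℝ, 0 < γ →
            μ {η | Bevent k ℓ (fillOutside (bigBox d ℓ) η)} ≤
              ENNReal.ofReal (Real.exp (-γ * ℓ)) →
            (∑' p : Site d × Site d,
                if p.1 ≠ origin ∧ adj p.1 p.2 then
                  ∫⁻ η, cval k η p.1 p.2 *
                      ENNReal.ofReal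
                        ((fTest d k ℓ (swap η p.1 p.2) - fTest d k ℓ η) ^ 2)
                    ∂(condOcc μ)
                else 0) ≤
              ENNReal.ofReal (C * (ℓ : ℝ) ^ (d + 2) * Real.exp (-γ * ℓ)) := by
  refine ⟨4 * (d + 1) * 5 ^ d, by positivity, fun k ℓ _ _ q _ hq μ hμ γ _ hB => ?_⟩
  refine (tsum_le_of_adj (r := ℓ + 1)
    (b := 2 * ENNReal.ofReal ((ℓ : ℝ) ^ 2) * μ {η | Bevent k ℓ (fillOutside (bigBox d ℓ) η)})
    ?_ fun p => ?_).trans ?_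
  · intro x y h
    split_ifs at h with hxy
    · exact ⟨hxy.2, by_contra fun hx => h (lintegral_edge_eq_zero hxy.2 hx)⟩
    · exact absurd rfl h
  · split_ifs with hxy
    · exact lintegral_edge_le hμ hq hxy.2
    · exact zero_le
  have he := (Real.exp_pos (-γ * ℓ)).le
  calc _ ≤ (((2 * (ℓ + 1) + 1) ^ d * (2 * d) : ℕ) : ℝ≥0∞) *
        (2 * ENNReal.ofReal ((ℓ : ℝ) ^ 2) * ENNReal.ofReal (Real.exp (-γ * ℓ))) := by gcongr
    _ = ENNReal.ofReal ((((2 * (ℓ + 1) + 1) ^ d * (2 * d) : ℕ) : ℝ) * (2 * (ℓ : ℝ) ^ 2) *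
        Real.exp (-γ * ℓ)) := by
      rw [ENNReal.ofReal_mul (by positivity), ENNReal.ofReal_mul (by positivity),
        ENNReal.ofReal_mul (by positivity), ENNReal.ofReal_natCast, ENNReal.ofReal_ofNat]
      ring
    _ ≤ _ := ENNReal.ofReal_le_ofReal (mul_le_mul_of_nonneg_right (card_edges_mul_le d ℓ) he)

/-- If `μ(B) ≤ e^{-γℓ}` then the environment part of the
Dirichlet form of the test function is at most `C ℓ^{d+2} e^{-γℓ}`. -/
theorem statement17 (d : ℕ) (hd : 2 ≤ d) :
    ∃ C : ℝ, 0 < C ∧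
      ∀ k ℓ : ℕ, 2 ≤ k → k ≤ d → ∀ q : ℝ, 0 < q → q < 1 →
        ∀ μ : Measure (Config d), IsBernoulliProduct q μ →
          ∀ γ : ℝ, 0 < γ →
            μ {η | Bevent k ℓ (fillOutside (bigBox d ℓ) η)} ≤
              ENNReal.ofReal (Real.exp (-γ * ℓ)) →
            (∑' p : Site d × Site d,
                if p.1 ≠ origin ∧ adj p.1 p.2 then
                  ∫⁻ η, cval k η p.1 p.2 *
                      ENNReal.ofReal
                        ((fTest d k ℓ (swap η p.1 p.2) - fTest d k ℓ η) ^ 2)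
                    ∂(condOcc μ)
                else 0) ≤
              ENNReal.ofReal (C * (ℓ : ℝ) ^ (d + 2) * Real.exp (-γ * ℓ)) :=
  statement17_general d

end KA
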